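/- Let q be a prime power and Q1, Q2, Q3, Q4 points of the canonical subgeometry Σ ≅ PG(4,q) of PG(4,q^5) spanning a 3-space, with coordinates in F_q^5. Let γ, γ' ∈ F_{q^5} \ F_q with γ' = (aγ+b)/(cγ+d) for some a,b,c,d ∈ F_q, ad − bc ≠ 0. Then the line joining P1 = ⟨Q1 + γQ2⟩ and P2 = ⟨Q3 + γ'Q4⟩ contains at least q+1 rank-2 points, namely P2 together with the q points ⟨(Q1 + μ(dQ3 + bQ4)) + γ(Q2 + μ(cQ3 + aQ4))⟩ for μ ∈ F_q, and these points form an F_q-subline. -/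

import Mathlib

/-!
Write `W = Q1 + γ Q2`, `V = Q3 + γ' Q4` and `δ = cγ + d`. Since `δ γ' = aγ + b`, the point
`(Q1 + μ(dQ3 + bQ4)) + γ(Q2 + μ(cQ3 + aQ4))` is `⟨W + μ δV⟩`, and `⟨V⟩ = ⟨δV⟩`; so the `q + 1`
points are exactly the points `⟨sW + tδV⟩`, `(s, t) ∈ F_q² \ {0}`, of the line `⟨W, V⟩`, and they
are pairwise distinct because `W` and `δV` are independent. Each of them has the form `⟨A + γ B⟩`
with `A, B ∈ F_q⁵` independent and `γ ∉ F_q`: it lies on the extension of the line `AB` of `Σ`, and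
it is not in `Σ`, since `A + γ B = c w` with `w` rational would force `A` and `B` to be rational
multiples of `w`.
-/

/-- Coordinatewise inclusion of `F_q`-vectors into `F_{q⁵}`-vectors. -/
def toK (F K : Type*) [Field F] [Field K] [Algebra F K] (w : Fin 5 → F) : Fin 5 → K :=
  fun i => algebraMap F K (w i)

/-- The canonical subgeometry `Σ ≅ PG(4,q)` of `PG(4,q⁵)`. -/
def sigmaSet (F K : Type*) [Field F] [Field K] [Algebra F K] :
    Set (Projectivization K (Fin 5 → K)) :=
  {P | ∃ (w : Fin 5 → F) (c : K), P.rep = c • toK F K w}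

/-- The set `Ω₂` of rank-2 points. -/
def omega2Set (F K : Type*) [Field F] [Field K] [Algebra F K] :
    Set (Projectivization K (Fin 5 → K)) :=
  {P | P ∉ sigmaSet F K ∧ ∃ Q1 Q2 : Projectivization K (Fin 5 → K),
    Q1 ∈ sigmaSet F K ∧ Q2 ∈ sigmaSet F K ∧ Q1 ≠ Q2 ∧
    P.rep ∈ Submodule.span K ({Q1.rep, Q2.rep} : Set (Fin 5 → K))}

/-- A set of points of `PG(4,q⁵)` is an `F_q`-subline if it consists of the points
`⟨s•w1 + t•w2⟩` with `(s,t) ∈ F_q² \ {0}` for some `K`-independent `w1, w2`. -/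
def isSubline (F K : Type*) [Field F] [Field K] [Algebra F K]
    (S : Set (Projectivization K (Fin 5 → K))) : Prop :=
  ∃ w1 w2 : Fin 5 → K, LinearIndependent K ![w1, w2] ∧
    S = {P | ∃ (v : Fin 5 → K) (hv : v ≠ 0), P = Projectivization.mk K v hv ∧
      ∃ s t : F, v = algebraMap F K s • w1 + algebraMap F K t • w2}

open Projectivization Submodule
open scoped LinearAlgebra.Projectivization

section Projective

variable {K V : Type*} [Field K] [AddCommGroup V] [Module K V]

lemma Projectivization.span_singleton_mk_rep {v : V} (hv : v ≠ 0) :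
    K ∙ (mk K v hv).rep = K ∙ v := by
  rw [← submodule_eq, submodule_mk]

lemma Projectivization.mk_rep_mem_iff {W : Submodule K V} {v : V} (hv : v ≠ 0) :
    (mk K v hv).rep ∈ W ↔ v ∈ W := by
  rw [← span_singleton_le_iff_mem, span_singleton_mk_rep, span_singleton_le_iff_mem]

lemma Projectivization.span_pair_mk_rep {v w : V} (hv : v ≠ 0) (hw : w ≠ 0) :
    span K {(mk K v hv).rep, (mk K w hw).rep} = span K {v, w} := by
  rw [span_insert, span_insert, span_singleton_mk_rep, span_singleton_mk_rep]

lemma Submodule.span_pair_smul_right (x y : V) {c : K} (hc : c ≠ 0) :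
    span K {x, c • y} = span K {x, y} := by
  rw [span_insert, span_insert, span_singleton_smul_eq hc.isUnit]

lemma LinearIndependent.ne_zero_left {x y : V} (h : LinearIndependent K ![x, y]) : x ≠ 0 :=
  h.ne_zero 0

lemma LinearIndependent.ne_zero_right {x y : V} (h : LinearIndependent K ![x, y]) : y ≠ 0 :=
  h.ne_zero 1

lemma LinearIndependent.add_smul_ne_zero {x y : V} (h : LinearIndependent K ![x, y]) (c : K) :
    x + c • y ≠ 0 := fun hxy =>
  one_ne_zero (LinearIndependent.pair_iff.1 h 1 c (by rwa [one_smul])).1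

lemma linearIndependent_of_finrank_span_eq_four {e₁ e₂ e₃ e₄ : V}
    (h : Module.finrank K (span K {e₁, e₂, e₃, e₄}) = 4) :
    LinearIndependent K ![e₁, e₂, e₃, e₄] := by
  have hrange : Set.range ![e₁, e₂, e₃, e₄] = {e₁, e₂, e₃, e₄} := by
    simp only [Matrix.range_cons, Matrix.range_empty, Set.union_empty, Set.singleton_union]
  rw [linearIndependent_iff_card_eq_finrank_span, Set.finrank, hrange, h, Fintype.card_fin]

section Four

variable {e₁ e₂ e₃ e₄ : V}

lemma LinearIndependent.coeffs_eq_zero_of_four (he : LinearIndependent K ![e₁, e₂, e₃, e₄])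
    {x₁ x₂ x₃ x₄ : K} (h : x₁ • e₁ + x₂ • e₂ + x₃ • e₃ + x₄ • e₄ = 0) :
    x₁ = 0 ∧ x₂ = 0 ∧ x₃ = 0 ∧ x₄ = 0 := by
  have := Fintype.linearIndependent_iff.1 he ![x₁, x₂, x₃, x₄] (by simpa [Fin.sum_univ_four])
  exact ⟨this 0, this 1, this 2, this 3⟩

lemma LinearIndependent.pair_of_four_right (he : LinearIndependent K ![e₁, e₂, e₃, e₄]) :
    LinearIndependent K ![e₃, e₄] :=
  LinearIndependent.pair_iff.2 fun _ _ h =>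
    (he.coeffs_eq_zero_of_four (x₁ := 0) (x₂ := 0) (by simpa using h)).2.2

lemma LinearIndependent.pair_add_of_mem_span_of_four
    (he : LinearIndependent K ![e₁, e₂, e₃, e₄]) {u v : V}
    (hu : u ∈ span K {e₃, e₄}) (hv : v ∈ span K {e₃, e₄}) :
    LinearIndependent K ![e₁ + u, e₂ + v] := by
  obtain ⟨u₃, u₄, rfl⟩ := mem_span_pair.1 hu
  obtain ⟨v₃, v₄, rfl⟩ := mem_span_pair.1 hv
  refine LinearIndependent.pair_iff.2 fun s t h => ?_
  obtain ⟨hs, ht, -⟩ := he.coeffs_eq_zero_of_four (x₁ := s) (x₂ := t)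
    (x₃ := s * u₃ + t * v₃) (x₄ := s * u₄ + t * v₄) (by linear_combination (norm := module) h)
  exact ⟨hs, ht⟩

lemma LinearIndependent.pair_add_smul_smul_of_four
    (he : LinearIndependent K ![e₁, e₂, e₃, e₄]) (γ γ' : K) {δ : K} (hδ : δ ≠ 0) :
    LinearIndependent K ![e₁ + γ • e₂, δ • (e₃ + γ' • e₄)] := by
  refine LinearIndependent.pair_iff.2 fun s t h => ?_
  obtain ⟨hs, -, ht, -⟩ := he.coeffs_eq_zero_of_four (x₁ := s) (x₂ := s * γ) (x₃ := t * δ)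
    (x₄ := t * δ * γ') (by linear_combination (norm := module) h)
  exact ⟨hs, (mul_eq_zero.1 ht).resolve_right hδ⟩

end Four

end Projective

section Subline

variable {F K V : Type*} [Field F] [Field K] [Algebra F K] [AddCommGroup V] [Module K V]

variable (F K) in
def sublinePoints (w₁ w₂ : V) : Set (ℙ K V) :=
  {P | ∃ (v : V) (hv : v ≠ 0), P = mk K v hv ∧
    ∃ s t : F, v = algebraMap F K s • w₁ + algebraMap F K t • w₂}

variable {w₁ w₂ : V}

lemma sublinePoints_eq_insert_range (h : LinearIndependent K ![w₁, w₂]) :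
    sublinePoints F K w₁ w₂ = insert (mk K w₂ h.ne_zero_right)
      (Set.range fun μ : F => mk K (w₁ + algebraMap F K μ • w₂) (h.add_smul_ne_zero _)) := by
  ext P
  constructor
  · rintro ⟨v, hv, rfl, s, t, rfl⟩
    by_cases hs : s = 0
    · subst hs
      left
      exact (mk_eq_mk_iff' K _ _ _ _).2 ⟨algebraMap F K t, by simp⟩
    · right
      refine ⟨t / s, ?_⟩
      rw [mk_eq_mk_iff' K]
      have hs' : algebraMap F K s ≠ 0 := by simpa using hs
      refine ⟨(algebraMap F K s)⁻¹, ?_⟩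
      rw [smul_add, smul_smul, smul_smul, inv_mul_cancel₀ hs', one_smul, map_div₀, div_eq_inv_mul]
  · rintro (rfl | ⟨μ, rfl⟩)
    · exact ⟨w₂, _, rfl, 0, 1, by simp⟩
    · exact ⟨_, _, rfl, 1, μ, by simp⟩

lemma setOf_mk_eq_sublinePoints (h : LinearIndependent K ![w₁, w₂]) {c : K} {y : V}
    (hy : c • y = w₂) {f : F → V} (hf : ∀ μ, f μ = w₁ + algebraMap F K μ • w₂) :
    {P : ℙ K V | ∃ (v : V) (hv : v ≠ 0), P = mk K v hv ∧ (v = y ∨ ∃ μ, v = f μ)} =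
      sublinePoints F K w₁ w₂ := by
  obtain ⟨hc, hy₀⟩ := smul_ne_zero_iff.1 (hy ▸ h.ne_zero_right)
  have hmk : mk K y hy₀ = mk K w₂ h.ne_zero_right :=
    (mk_eq_mk_iff' K _ _ _ _).2 ⟨c⁻¹, by rw [← hy, inv_smul_smul₀ hc]⟩
  rw [sublinePoints_eq_insert_range h]
  ext P
  constructor
  · rintro ⟨v, hv, rfl, rfl | ⟨μ, rfl⟩⟩
    exacts [Or.inl hmk, Or.inr ⟨μ, by simp_rw [hf]⟩]
  · rintro (rfl | ⟨μ, rfl⟩)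
    · exact ⟨y, hy₀, hmk.symm, Or.inl rfl⟩
    · exact ⟨f μ, hf μ ▸ h.add_smul_ne_zero _, by simp_rw [hf], Or.inr ⟨μ, rfl⟩⟩

lemma card_sublinePoints [Finite F] (h : LinearIndependent K ![w₁, w₂]) :
    Nat.card (sublinePoints F K w₁ w₂) = Nat.card F + 1 := by
  have hinj : Function.Injective fun μ : F =>
      mk K (w₁ + algebraMap F K μ • w₂) (h.add_smul_ne_zero _) := by
    intro μ μ' hμ
    obtain ⟨a, ha⟩ := (mk_eq_mk_iff' K _ _ _ _).1 hμ
    obtain ⟨ha₁, ha₂⟩ := LinearIndependent.pair_iff.1 h (a - 1)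
      (a * algebraMap F K μ' - algebraMap F K μ) (by linear_combination (norm := module) ha)
    rw [sub_eq_zero.1 ha₁, one_mul, sub_eq_zero] at ha₂
    exact ((algebraMap F K).injective ha₂).symm
  have hnot : mk K w₂ h.ne_zero_right ∉ Set.range fun μ : F =>
      mk K (w₁ + algebraMap F K μ • w₂) (h.add_smul_ne_zero _) := by
    rintro ⟨μ, hμ⟩
    obtain ⟨a, ha⟩ := (mk_eq_mk_iff' K _ _ _ _).1 hμ
    exact one_ne_zero (LinearIndependent.pair_iff.1 h 1 (algebraMap F K μ - a)
      (by linear_combination (norm := module) -ha)).1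
  rw [sublinePoints_eq_insert_range h, Nat.card_coe_set_eq, Set.ncard_insert_of_notMem hnot,
    Set.ncard_range_of_injective hinj]

lemma rep_mem_span_of_mem_sublinePoints {P : ℙ K V} (hP : P ∈ sublinePoints F K w₁ w₂) :
    P.rep ∈ span K {w₁, w₂} := by
  obtain ⟨v, hv, rfl, s, t, rfl⟩ := hP
  exact (mk_rep_mem_iff hv).2 (mem_span_pair.2 ⟨_, _, rfl⟩)

end Subline

section Subgeometry

variable {F K : Type*} [Field F] [Field K] [Algebra F K]

@[simp]
lemma toK_add (v w : Fin 5 → F) : toK F K (v + w) = toK F K v + toK F K w := by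
  ext; simp [toK]

@[simp]
lemma toK_sub (v w : Fin 5 → F) : toK F K (v - w) = toK F K v - toK F K w := by
  ext; simp [toK]

@[simp]
lemma toK_smul (c : F) (v : Fin 5 → F) : toK F K (c • v) = algebraMap F K c • toK F K v := by
  ext; simp [toK]

@[simp]
lemma toK_zero : toK F K (0 : Fin 5 → F) = 0 := by
  ext; simp [toK]

lemma mk_toK_mem_sigmaSet (w : Fin 5 → F) (hw : toK F K w ≠ 0) :
    mk K (toK F K w) hw ∈ sigmaSet F K := by
  obtain ⟨u, hu⟩ := exists_smul_eq_mk_rep K _ hw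
  exact ⟨w, u, hu.symm⟩

lemma eq_zero_of_algebraMap_add_mul_algebraMap_eq_zero {γ : K}
    (hγ : γ ∉ Set.range (algebraMap F K)) {x y : F}
    (h : algebraMap F K x + γ * algebraMap F K y = 0) : x = 0 ∧ y = 0 := by
  by_cases hy : y = 0
  · subst hy
    simpa using h
  · refine absurd ⟨-x / y, ?_⟩ hγ
    have hy' : algebraMap F K y ≠ 0 := by simpa using hy
    rw [map_div₀, map_neg, div_eq_iff hy']
    linear_combination -h

lemma algebraMap_mul_add_algebraMap_ne_zero {γ : K} (hγ : γ ∉ Set.range (algebraMap F K))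
    {c d : F} (hcd : c ≠ 0 ∨ d ≠ 0) : algebraMap F K c * γ + algebraMap F K d ≠ 0 := by
  intro h
  obtain ⟨hd, hc⟩ := eq_zero_of_algebraMap_add_mul_algebraMap_eq_zero hγ
    (x := d) (y := c) (by linear_combination h)
  exact hcd.elim (· hc) (· hd)

lemma eq_zero_of_toK_add_smul_toK_eq_zero {γ : K} (hγ : γ ∉ Set.range (algebraMap F K))
    {v w : Fin 5 → F} (h : toK F K v + γ • toK F K w = 0) : v = 0 ∧ w = 0 := by
  have hi i := eq_zero_of_algebraMap_add_mul_algebraMap_eq_zero hγ (congrFun h i)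
  exact ⟨funext fun i => (hi i).1, funext fun i => (hi i).2⟩

/-- Comparing with a coordinate where `w` is nonzero shows that `A` and `B` would both be
`F`-multiples of `w`, since `1, γ` are `F`-independent. -/
lemma toK_add_smul_toK_ne_smul_toK {γ : K} (hγ : γ ∉ Set.range (algebraMap F K))
    {A B : Fin 5 → F} (hAB : LinearIndependent K ![toK F K A, toK F K B]) (c : K)
    (w : Fin 5 → F) : toK F K A + γ • toK F K B ≠ c • toK F K w := by
  intro h
  obtain ⟨j, hj⟩ : ∃ j, w j ≠ 0 := by
    by_contra! hw
    obtain rfl : w = 0 := funext hw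
    exact hAB.add_smul_ne_zero γ (by rw [h, toK_zero, smul_zero])
  set α := A j / w j
  set β := B j / w j
  have hc : algebraMap F K α + γ * algebraMap F K β = c := by
    have hj' : algebraMap F K (w j) ≠ 0 := by simpa using hj
    have hcoord : algebraMap F K (A j) + γ * algebraMap F K (B j) = c * algebraMap F K (w j) :=
      congrFun h j
    rw [map_div₀, map_div₀]
    field_simp
    linear_combination hcoord
  obtain ⟨hA, hB⟩ := eq_zero_of_toK_add_smul_toK_eq_zero hγ
    (v := A - α • w) (w := B - β • w) <| by
      simp only [toK_sub, toK_smul]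
      linear_combination (norm := module) h - hc • toK F K w
  rw [sub_eq_zero] at hA hB
  obtain ⟨-, hα⟩ := LinearIndependent.pair_iff.1 hAB (algebraMap F K β) (-algebraMap F K α) (by rw [hA, hB, toK_smul, toK_smul]; module)
  rw [neg_eq_zero] at hα
  exact hAB.ne_zero_left (by rw [hA, toK_smul, hα, zero_smul])

lemma mk_mem_omega2Set_of_eq_toK_add_smul_toK {γ : K} (hγ : γ ∉ Set.range (algebraMap F K))
    {A B : Fin 5 → F} (hAB : LinearIndependent K ![toK F K A, toK F K B]) {v : Fin 5 → K}
    (hv : v ≠ 0) (hvAB : v = toK F K A + γ • toK F K B) : mk K v hv ∈ omega2Set F K := by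
  subst hvAB
  refine ⟨?_, mk K (toK F K A) hAB.ne_zero_left, mk K (toK F K B) hAB.ne_zero_right,
    mk_toK_mem_sigmaSet _ _, mk_toK_mem_sigmaSet _ _, ?_, ?_⟩
  · rintro ⟨w, c, hc⟩
    obtain ⟨u, hu⟩ := exists_smul_eq_mk_rep K _ hv
    apply toK_add_smul_toK_ne_smul_toK hγ hAB ((u : K)⁻¹ * c) w
    rw [mul_smul, ← hc, ← hu, Units.smul_def, inv_smul_smul₀ u.ne_zero]
  · rw [Ne, mk_eq_mk_iff' K]
    rintro ⟨a, ha⟩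
    exact one_ne_zero (LinearIndependent.pair_iff.1 hAB 1 (-a)
      (by linear_combination (norm := module) -ha)).1
  · rw [span_pair_mk_rep, mk_rep_mem_iff]
    exact mem_span_pair.2 ⟨1, γ, by rw [one_smul]⟩

end Subgeometry

theorem stmt_10_general {q : ℕ} (F K : Type*) [Field F] [Fintype F]
    [Field K] [Algebra F K] (hF : Fintype.card F = q)
    (Q1 Q2 Q3 Q4 : Fin 5 → F)
    (hspan : Module.finrank K (Submodule.span K
      ({toK F K Q1, toK F K Q2, toK F K Q3, toK F K Q4} : Set (Fin 5 → K))) = 4)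
    (γ γ' : K) (hγ : γ ∉ Set.range (algebraMap F K)) (hγ' : γ' ∉ Set.range (algebraMap F K))
    (a b c d : F) (hdet : a * d - b * c ≠ 0)
    (hγ'eq : γ' = (algebraMap F K a * γ + algebraMap F K b) /
      (algebraMap F K c * γ + algebraMap F K d)) :
    Nat.card {P : Projectivization K (Fin 5 → K) |
        ∃ (v : Fin 5 → K) (hv : v ≠ 0), P = Projectivization.mk K v hv ∧
          (v = toK F K Q3 + γ' • toK F K Q4 ∨
            ∃ μ : F, v = (toK F K Q1 +
                algebraMap F K μ • (algebraMap F K d • toK F K Q3 +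
                  algebraMap F K b • toK F K Q4)) +
              γ • (toK F K Q2 + algebraMap F K μ • (algebraMap F K c • toK F K Q3 +
                  algebraMap F K a • toK F K Q4)))} = q + 1 ∧
    {P : Projectivization K (Fin 5 → K) |
        ∃ (v : Fin 5 → K) (hv : v ≠ 0), P = Projectivization.mk K v hv ∧
          (v = toK F K Q3 + γ' • toK F K Q4 ∨
            ∃ μ : F, v = (toK F K Q1 +
                algebraMap F K μ • (algebraMap F K d • toK F K Q3 +
                  algebraMap F K b • toK F K Q4)) +
              γ • (toK F K Q2 + algebraMap F K μ • (algebraMap F K c • toK F K Q3 +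
                  algebraMap F K a • toK F K Q4)))} ⊆ omega2Set F K ∧
    (∀ P ∈ {P : Projectivization K (Fin 5 → K) |
        ∃ (v : Fin 5 → K) (hv : v ≠ 0), P = Projectivization.mk K v hv ∧
          (v = toK F K Q3 + γ' • toK F K Q4 ∨
            ∃ μ : F, v = (toK F K Q1 +
                algebraMap F K μ • (algebraMap F K d • toK F K Q3 +
                  algebraMap F K b • toK F K Q4)) +
              γ • (toK F K Q2 + algebraMap F K μ • (algebraMap F K c • toK F K Q3 +
                  algebraMap F K a • toK F K Q4)))},
      P.rep ∈ Submodule.span K ({toK F K Q1 + γ • toK F K Q2,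
        toK F K Q3 + γ' • toK F K Q4} : Set (Fin 5 → K))) ∧
    isSubline F K {P : Projectivization K (Fin 5 → K) |
        ∃ (v : Fin 5 → K) (hv : v ≠ 0), P = Projectivization.mk K v hv ∧
          (v = toK F K Q3 + γ' • toK F K Q4 ∨
            ∃ μ : F, v = (toK F K Q1 +
                algebraMap F K μ • (algebraMap F K d • toK F K Q3 +
                  algebraMap F K b • toK F K Q4)) +
              γ • (toK F K Q2 + algebraMap F K μ • (algebraMap F K c • toK F K Q3 +
                  algebraMap F K a • toK F K Q4)))} := by
  have he := linearIndependent_of_finrank_span_eq_four hspan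
  set δ := algebraMap F K c * γ + algebraMap F K d
  have hδ : δ ≠ 0 := algebraMap_mul_add_algebraMap_ne_zero hγ <| by
    contrapose! hdet
    simp [hdet]
  have hδγ' : δ * γ' = algebraMap F K a * γ + algebraMap F K b := by
    rw [hγ'eq]
    field_simp
  have hpoint (μ : F) :
      (toK F K Q1 + algebraMap F K μ • (algebraMap F K d • toK F K Q3 +
          algebraMap F K b • toK F K Q4)) +
        γ • (toK F K Q2 + algebraMap F K μ • (algebraMap F K c • toK F K Q3 +
          algebraMap F K a • toK F K Q4)) =
      (toK F K Q1 + γ • toK F K Q2) + algebraMap F K μ • δ • (toK F K Q3 + γ' • toK F K Q4) := by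
    rw [smul_add δ, smul_smul δ, hδγ']
    module
  have hW := he.pair_add_smul_smul_of_four γ γ' hδ
  have hS := setOf_mk_eq_sublinePoints (F := F) hW rfl hpoint
  refine ⟨?_, ?_, fun P hP => ?_, ⟨_, _, hW, hS⟩⟩
  · rw [hS, card_sublinePoints hW, Nat.card_eq_fintype_card, hF]
  · rintro _ ⟨v, hv, rfl, rfl | ⟨μ, rfl⟩⟩
    · exact mk_mem_omega2Set_of_eq_toK_add_smul_toK hγ' he.pair_of_four_right hv rfl
    · have hAB : LinearIndependent K
          ![toK F K (Q1 + μ • (d • Q3 + b • Q4)), toK F K (Q2 + μ • (c • Q3 + a • Q4))] := by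
        simp only [toK_add, toK_smul]
        exact he.pair_add_of_mem_span_of_four (smul_mem _ _ (mem_span_pair.2 ⟨_, _, rfl⟩))
          (smul_mem _ _ (mem_span_pair.2 ⟨_, _, rfl⟩))
      exact mk_mem_omega2Set_of_eq_toK_add_smul_toK hγ hAB hv (by simp only [toK_add, toK_smul])
  · rw [hS] at hP
    rw [← span_pair_smul_right _ _ hδ]
    exact rep_mem_span_of_mem_sublinePoints hP

/-- With `Q1,…,Q4 ∈ Σ` spanning a `3`-space, `γ' = (aγ+b)/(cγ+d)` with
`ad-bc ≠ 0`, the line through `P1 = ⟨Q1+γQ2⟩` and `P2 = ⟨Q3+γ'Q4⟩` contains at least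
`q+1` rank-2 points: `P2` together with the `q` points
`⟨(Q1 + μ(dQ3+bQ4)) + γ(Q2 + μ(cQ3+aQ4))⟩`, `μ ∈ F_q`, and they form an `F_q`-subline. -/
theorem stmt_10 {q : ℕ} (hq : IsPrimePow q) (F K : Type*) [Field F] [Fintype F]
    [Field K] [Algebra F K] (hF : Fintype.card F = q) (hK : Module.finrank F K = 5)
    (Q1 Q2 Q3 Q4 : Fin 5 → F)
    (hspan : Module.finrank K (Submodule.span K
      ({toK F K Q1, toK F K Q2, toK F K Q3, toK F K Q4} : Set (Fin 5 → K))) = 4)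
    (γ γ' : K) (hγ : γ ∉ Set.range (algebraMap F K)) (hγ' : γ' ∉ Set.range (algebraMap F K))
    (a b c d : F) (hdet : a * d - b * c ≠ 0)
    (hγ'eq : γ' = (algebraMap F K a * γ + algebraMap F K b) /
      (algebraMap F K c * γ + algebraMap F K d)) :
    Nat.card {P : Projectivization K (Fin 5 → K) |
        ∃ (v : Fin 5 → K) (hv : v ≠ 0), P = Projectivization.mk K v hv ∧
          (v = toK F K Q3 + γ' • toK F K Q4 ∨
            ∃ μ : F, v = (toK F K Q1 +
                algebraMap F K μ • (algebraMap F K d • toK F K Q3 +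
                  algebraMap F K b • toK F K Q4)) +
              γ • (toK F K Q2 + algebraMap F K μ • (algebraMap F K c • toK F K Q3 +
                  algebraMap F K a • toK F K Q4)))} = q + 1 ∧
    {P : Projectivization K (Fin 5 → K) |
        ∃ (v : Fin 5 → K) (hv : v ≠ 0), P = Projectivization.mk K v hv ∧
          (v = toK F K Q3 + γ' • toK F K Q4 ∨
            ∃ μ : F, v = (toK F K Q1 +
                algebraMap F K μ • (algebraMap F K d • toK F K Q3 +
                  algebraMap F K b • toK F K Q4)) +
              γ • (toK F K Q2 + algebraMap F K μ • (algebraMap F K c • toK F K Q3 +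
                  algebraMap F K a • toK F K Q4)))} ⊆ omega2Set F K ∧
    (∀ P ∈ {P : Projectivization K (Fin 5 → K) |
        ∃ (v : Fin 5 → K) (hv : v ≠ 0), P = Projectivization.mk K v hv ∧
          (v = toK F K Q3 + γ' • toK F K Q4 ∨
            ∃ μ : F, v = (toK F K Q1 +
                algebraMap F K μ • (algebraMap F K d • toK F K Q3 +
                  algebraMap F K b • toK F K Q4)) +
              γ • (toK F K Q2 + algebraMap F K μ • (algebraMap F K c • toK F K Q3 +
                  algebraMap F K a • toK F K Q4)))},
      P.rep ∈ Submodule.span K ({toK F K Q1 + γ • toK F K Q2,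
        toK F K Q3 + γ' • toK F K Q4} : Set (Fin 5 → K))) ∧
    isSubline F K {P : Projectivization K (Fin 5 → K) |
        ∃ (v : Fin 5 → K) (hv : v ≠ 0), P = Projectivization.mk K v hv ∧
          (v = toK F K Q3 + γ' • toK F K Q4 ∨
            ∃ μ : F, v = (toK F K Q1 +
                algebraMap F K μ • (algebraMap F K d • toK F K Q3 +
                  algebraMap F K b • toK F K Q4)) +
              γ • (toK F K Q2 + algebraMap F K μ • (algebraMap F K c • toK F K Q3 +
                  algebraMap F K a • toK F K Q4)))} :=
  stmt_10_general F K hF Q1 Q2 Q3 Q4 hspan γ γ' hγ hγ' a b c d hdet hγ'eq
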